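/- arXiv:2207.11785 — 3 statements merged into one kernel-verified Lean document; each statement's English description precedes it below -/
import Mathlib

section
/- The inverse propensity weighted (IPW) ranking loss is an unbiased estimator of the ideal ranking loss when propensities are correctly estimated: if for every document d the estimated examination probability equals the true examination probability, then the expectation over examination indicators of the IPW loss equals the ideal loss, i.e., E[∑_{d : c_d = 1} Δ(d)/p̂_d] = ∑_{d : r_d = 1} Δ(d). -/
open MeasureTheory ProbabilityTheory Finset

theorem integral_finset_sum_mul_const {Ω ι : Type*} [MeasurableSpace Ω] {μ : Measure Ω}
    (s : Finset ι) {f : ι → Ω → ℝ} (hf : ∀ i ∈ s, Integrable (f i) μ) (c : ι → ℝ) :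
    ∫ ω, ∑ i ∈ s, f i ω * c i ∂μ = ∑ i ∈ s, (∫ ω, f i ω ∂μ) * c i := by
  rw [integral_finsetSum s fun i hi => (hf i hi).mul_const (c i)]
  exact sum_congr rfl fun i _ => integral_mul_const (c i) (f i)

theorem sum_mul_eq_sum_filter_eq_one {ι : Type*} (s : Finset ι) {r : ι → ℝ}
    (hr : ∀ i ∈ s, r i = 0 ∨ r i = 1) (g : ι → ℝ) :
    ∑ i ∈ s, r i * g i = ∑ i ∈ s with r i = 1, g i := by
  rw [sum_filter]
  refine sum_congr rfl fun i hi => ?_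
  rcases hr i hi with h | h <;> simp [h]

theorem ipw_unbiased_general {Ω : Type*} [MeasureSpace Ω]
    {D : Type*} [Fintype D]
    (r : D → ℝ) (hr : ∀ d, r d = 0 ∨ r d = 1)
    (p phat : D → ℝ)
    (hp : ∀ d, 0 < p d ∧ p d ≤ 1)
    (e : D → Ω → ℝ)
    (heInt : ∀ d, Integrable (e d)) (heE : ∀ d, ∫ ω, e d ω = p d)
    (Δ : D → ℝ)
    (hacc : ∀ d, phat d = p d) :
    ∫ ω, ∑ d, (e d ω * r d) * Δ d / phat d
      = ∑ d ∈ Finset.univ.filter (fun d => r d = 1), Δ d :=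
  calc ∫ ω, ∑ d, (e d ω * r d) * Δ d / phat d
      = ∫ ω, ∑ d, e d ω * (r d * Δ d / phat d) := by simp only [mul_assoc, mul_div_assoc]
    _ = ∑ d, p d * (r d * Δ d / phat d) := by
      rw [integral_finset_sum_mul_const _ fun d _ => heInt d]
      simp only [heE]
    _ = ∑ d, r d * Δ d :=
      sum_congr rfl fun d _ => by rw [hacc, mul_div_cancel₀ _ (hp d).1.ne']
    _ = ∑ d ∈ Finset.univ.filter (fun d => r d = 1), Δ d :=
      sum_mul_eq_sum_filter_eq_one _ (fun d _ => hr d) Δ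

/-- The IPW ranking loss is an unbiased estimator of the ideal ranking
loss when propensities are correctly estimated. -/
theorem ipw_unbiased {Ω : Type*} [MeasureSpace Ω] [IsProbabilityMeasure (ℙ : Measure Ω)]
    {D : Type*} [Fintype D]
    (r : D → ℝ) (hr : ∀ d, r d = 0 ∨ r d = 1)
    (p phat : D → ℝ)
    (hp : ∀ d, 0 < p d ∧ p d ≤ 1) (hphat : ∀ d, 0 < phat d ∧ phat d ≤ 1)
    (e : D → Ω → ℝ) (he01 : ∀ d ω, e d ω = 0 ∨ e d ω = 1)
    (heInt : ∀ d, Integrable (e d)) (heE : ∀ d, ∫ ω, e d ω = p d)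
    (Δ : D → ℝ)
    (hacc : ∀ d, phat d = p d) :
    ∫ ω, ∑ d, (e d ω * r d) * Δ d / phat d
      = ∑ d ∈ Finset.univ.filter (fun d => r d = 1), Δ d :=
  ipw_unbiased_general r hr p phat hp e heInt heE Δ hacc
end

section
/- The doubly robust estimator is unbiased if the propensity estimates are accurate: if for every ranked list π and document d in π we have p̂_{π,d} = p_{π,d} (equivalently, the propensity deviation ρ_{π,d} = (p_{π,d} − p̂_{π,d})/p̂_{π,d} is zero), then E[ℓ_DR] equals the ideal loss (1/|Π|)∑_{π ∈ Π} ∑_{d : c_{π,d}=1} Δ(c,π,d). -/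
open MeasureTheory ProbabilityTheory Finset

/-! With accurate propensities the correction term has expectation `∑ (c Δ - ĉ Δ)`, which
cancels the imputed loss `∑ ĉ Δ` of the direct method and leaves `∑ c Δ`; for binary clicks
this is the ideal loss over the clicked documents. -/

section

variable {Ω D : Type*} {m : MeasurableSpace Ω} {μ : Measure Ω}

theorem sum_mul_eq_sum_filter_eq_one_s5 (s : Finset D) {c : D → ℝ}
    (hc : ∀ d ∈ s, c d = 0 ∨ c d = 1) (Δ : D → ℝ) :
    ∑ d ∈ s, c d * Δ d = ∑ d ∈ s.filter (fun d => c d = 1), Δ d := by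
  rw [sum_filter]
  refine sum_congr rfl fun d hd => ?_
  rcases hc d hd with h | h <;> simp [h]

theorem integral_const_add_mul_sum [IsProbabilityMeasure μ] (s : Finset D) (a : ℝ)
    (x : D → ℝ) {o : Ω → ℝ} (ho : Integrable o μ) :
    ∫ ω, a + o ω * ∑ d ∈ s, x d ∂μ = a + ∑ d ∈ s, ∫ ω, o ω * x d ∂μ := by
  simp_rw [mul_sum]
  rw [integral_add (integrable_const a) (integrable_finsetSum _ fun d _ => ho.mul_const _),
    integral_finsetSum _ fun d _ => ho.mul_const _, integral_const, probReal_univ, one_smul]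

theorem integral_dr_term_of_accurate [IsProbabilityMeasure μ] (s : Finset D)
    (cΔ chatΔ p phat : D → ℝ) (hp : ∀ d ∈ s, p d ≠ 0) {o : Ω → ℝ} (ho : Integrable o μ)
    (hoE : ∀ d ∈ s, ∫ ω, o ω * ((cΔ d - chatΔ d) / phat d) ∂μ
      = p d * ((cΔ d - chatΔ d) / phat d))
    (hacc : ∀ d ∈ s, phat d = p d) :
    ∫ ω, (∑ d ∈ s, chatΔ d) + o ω * ∑ d ∈ s, (cΔ d - chatΔ d) / phat d ∂μ
      = ∑ d ∈ s, cΔ d := by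
  have hcorrection : ∀ d ∈ s, ∫ ω, o ω * ((cΔ d - chatΔ d) / phat d) ∂μ = cΔ d - chatΔ d := by
    intro d hd
    rw [hoE d hd, hacc d hd, mul_div_cancel₀ _ (hp d hd)]
  rw [integral_const_add_mul_sum s _ _ ho, sum_congr rfl hcorrection, ← sum_add_distrib]
  exact sum_congr rfl fun d _ => add_sub_cancel _ _

end

theorem dr_unbiased_accurate_propensity_general
    {Ω : Type*} [MeasureSpace Ω] [IsProbabilityMeasure (ℙ : Measure Ω)]
    {P : Type*} [Fintype P] {D : Type*}
    (Dset : P → Finset D)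
    (c chat : P → D → ℝ)
    (hc : ∀ π d, c π d = 0 ∨ c π d = 1)
    (Δc Δchat : P → D → ℝ)
    (p phat : P → D → ℝ)
    (hp : ∀ π d, 0 < p π d ∧ p π d ≤ 1)
    (o : P → Ω → ℝ)
    (hoInt : ∀ π, Integrable (o π))
    (hoE : ∀ π, ∀ d ∈ Dset π,
      ∫ ω, o π ω * ((c π d * Δc π d - chat π d * Δchat π d) / phat π d)
        = p π d * ((c π d * Δc π d - chat π d * Δchat π d) / phat π d))
    (hacc : ∀ π, ∀ d ∈ Dset π, phat π d = p π d) :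
    ∫ ω, (1 / (Fintype.card P : ℝ)) *
        ∑ π, ((∑ d ∈ Dset π, chat π d * Δchat π d)
          + o π ω * ∑ d ∈ Dset π,
              (c π d * Δc π d - chat π d * Δchat π d) / phat π d)
      = (1 / (Fintype.card P : ℝ)) *
          ∑ π, ∑ d ∈ (Dset π).filter (fun d => c π d = 1), Δc π d := by
  rw [integral_const_mul,
    integral_finsetSum _ fun π _ => by fun_prop]
  congr 1
  refine sum_congr rfl fun π _ => ?_
  rw [integral_dr_term_of_accurate (Dset π) (fun d => c π d * Δc π d)
      (fun d => chat π d * Δchat π d) (p π) (phat π) (fun d _ => (hp π d).1.ne') (hoInt π)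
      (hoE π) (hacc π)]
  exact sum_mul_eq_sum_filter_eq_one_s5 _ (fun d _ => hc π d) _

/-- The doubly robust estimator is unbiased if the propensity
estimates are accurate (p̂_{π,d} = p_{π,d} for all π, d). -/
theorem dr_unbiased_accurate_propensity
    {Ω : Type*} [MeasureSpace Ω] [IsProbabilityMeasure (ℙ : Measure Ω)]
    {P : Type*} [Fintype P] [Nonempty P] {D : Type*}
    (Dset : P → Finset D)
    (c chat : P → D → ℝ)
    (hc : ∀ π d, c π d = 0 ∨ c π d = 1) (hchat : ∀ π d, chat π d = 0 ∨ chat π d = 1)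
    (Δc Δchat : P → D → ℝ)
    (p phat : P → D → ℝ)
    (hp : ∀ π d, 0 < p π d ∧ p π d ≤ 1) (hphat : ∀ π d, 0 < phat π d ∧ phat π d ≤ 1)
    (o : P → Ω → ℝ) (ho01 : ∀ π ω, o π ω = 0 ∨ o π ω = 1)
    (hoInt : ∀ π, Integrable (o π))
    (hoE : ∀ π, ∀ d ∈ Dset π,
      ∫ ω, o π ω * ((c π d * Δc π d - chat π d * Δchat π d) / phat π d)
        = p π d * ((c π d * Δc π d - chat π d * Δchat π d) / phat π d))
    (hacc : ∀ π, ∀ d ∈ Dset π, phat π d = p π d) :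
    ∫ ω, (1 / (Fintype.card P : ℝ)) *
        ∑ π, ((∑ d ∈ Dset π, chat π d * Δchat π d)
          + o π ω * ∑ d ∈ Dset π,
              (c π d * Δc π d - chat π d * Δchat π d) / phat π d)
      = (1 / (Fintype.card P : ℝ)) *
          ∑ π, ∑ d ∈ (Dset π).filter (fun d => c π d = 1), Δc π d :=
  dr_unbiased_accurate_propensity_general Dset c chat hc Δc Δchat p phat hp o hoInt hoE hacc
end

section
/- The bias of the doubly robust estimator equals |(1/|Π|) ∑_{π ∈ Π} ∑_{d ∈ π} ρ_{π,d} · δ_{π,d}|, where ρ_{π,d} = (p_{π,d} − p̂_{π,d})/p̂_{π,d} is the propensity deviation and δ_{π,d} = c_{π,d}Δ(c,π,d) − ĉ_{π,d}Δ(ĉ,π,d) is the error deviation; the bias is |E[ℓ_DR] − ℓ_ideal| with ℓ_ideal = (1/|Π|)∑_{π∈Π}∑_{d∈π} c_{π,d}Δ(c,π,d). -/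
open MeasureTheory ProbabilityTheory Finset

/-! The correction term `o_π ∑ δ/p̂` has expectation `∑ p δ / p̂`, so per document the estimator
is off from the ideal loss by `ĉΔ(ĉ) + p δ / p̂ - cΔ(c) = (p - p̂)/p̂ · δ`: the bias is the
propensity deviation weighted by the error deviation. -/

lemma integral_mul_sum_of_integral_mul_eq {Ω ι : Type*} [MeasurableSpace Ω] {μ : Measure Ω}
    {o : Ω → ℝ} {s : Finset ι} {f p : ι → ℝ}
    (h : ∀ i ∈ s, ∫ ω, o ω * f i ∂μ = p i * f i) :
    ∫ ω, o ω * ∑ i ∈ s, f i ∂μ = ∑ i ∈ s, p i * f i := by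
  rw [integral_mul_const, mul_sum]
  exact sum_congr rfl fun i hi => by rw [← integral_mul_const, h i hi]

lemma integral_const_add_mul_sum_of_integral_mul_eq {Ω ι : Type*} [MeasurableSpace Ω]
    {μ : Measure Ω} [IsProbabilityMeasure μ] {o : Ω → ℝ} (ho : Integrable o μ) (a : ℝ)
    {s : Finset ι} {f p : ι → ℝ} (h : ∀ i ∈ s, ∫ ω, o ω * f i ∂μ = p i * f i) :
    ∫ ω, a + o ω * ∑ i ∈ s, f i ∂μ = a + ∑ i ∈ s, p i * f i := by
  rw [integral_add (integrable_const a) (ho.mul_const _), integral_const, probReal_univ,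
    one_smul, integral_mul_sum_of_integral_mul_eq h]

lemma add_mul_sub_div_sub_eq {x y p q : ℝ} (hq : q ≠ 0) :
    y + p * ((x - y) / q) - x = (p - q) / q * (x - y) := by
  field_simp
  ring

theorem dr_bias_general
    {Ω : Type*} [MeasureSpace Ω] [IsProbabilityMeasure (ℙ : Measure Ω)]
    {P : Type*} [Fintype P] {D : Type*}
    (Dset : P → Finset D)
    (c chat : P → D → ℝ)
    (Δc Δchat : P → D → ℝ)
    (p phat : P → D → ℝ)
    (hphat : ∀ π d, 0 < phat π d ∧ phat π d ≤ 1)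
    (o : P → Ω → ℝ)
    (hoInt : ∀ π, Integrable (o π))
    (hoE : ∀ π, ∀ d ∈ Dset π,
      ∫ ω, o π ω * ((c π d * Δc π d - chat π d * Δchat π d) / phat π d)
        = p π d * ((c π d * Δc π d - chat π d * Δchat π d) / phat π d)) :
    |(∫ ω, (1 / (Fintype.card P : ℝ)) *
        ∑ π, ((∑ d ∈ Dset π, chat π d * Δchat π d)
          + o π ω * ∑ d ∈ Dset π,
              (c π d * Δc π d - chat π d * Δchat π d) / phat π d))
      - (1 / (Fintype.card P : ℝ)) * ∑ π, ∑ d ∈ Dset π, c π d * Δc π d|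
    = |(1 / (Fintype.card P : ℝ)) * ∑ π, ∑ d ∈ Dset π,
        (p π d - phat π d) / phat π d
          * (c π d * Δc π d - chat π d * Δchat π d)| := by
  rw [integral_const_mul, integral_finsetSum _ fun π _ =>
    integrable_const_add_iff.mpr ((hoInt π).mul_const _), ← mul_sub, ← sum_sub_distrib]
  congr 3 with π
  rw [integral_const_add_mul_sum_of_integral_mul_eq (hoInt π) _ (hoE π), ← sum_add_distrib,
    ← sum_sub_distrib]
  exact sum_congr rfl fun d _ => add_mul_sub_div_sub_eq (hphat π d).1.ne'

/-- The bias of the doubly robust estimator equals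
|(1/|Π|) ∑_{π ∈ Π} ∑_{d ∈ π} ρ_{π,d} · δ_{π,d}|. -/
theorem dr_bias
    {Ω : Type*} [MeasureSpace Ω] [IsProbabilityMeasure (ℙ : Measure Ω)]
    {P : Type*} [Fintype P] [Nonempty P] {D : Type*}
    (Dset : P → Finset D)
    (c chat : P → D → ℝ)
    (hc : ∀ π d, c π d = 0 ∨ c π d = 1) (hchat : ∀ π d, chat π d = 0 ∨ chat π d = 1)
    (Δc Δchat : P → D → ℝ)
    (p phat : P → D → ℝ)
    (hp : ∀ π d, 0 < p π d ∧ p π d ≤ 1) (hphat : ∀ π d, 0 < phat π d ∧ phat π d ≤ 1)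
    (o : P → Ω → ℝ) (ho01 : ∀ π ω, o π ω = 0 ∨ o π ω = 1)
    (hoInt : ∀ π, Integrable (o π))
    (hoE : ∀ π, ∀ d ∈ Dset π,
      ∫ ω, o π ω * ((c π d * Δc π d - chat π d * Δchat π d) / phat π d)
        = p π d * ((c π d * Δc π d - chat π d * Δchat π d) / phat π d)) :
    |(∫ ω, (1 / (Fintype.card P : ℝ)) *
        ∑ π, ((∑ d ∈ Dset π, chat π d * Δchat π d)
          + o π ω * ∑ d ∈ Dset π,
              (c π d * Δc π d - chat π d * Δchat π d) / phat π d))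
      - (1 / (Fintype.card P : ℝ)) * ∑ π, ∑ d ∈ Dset π, c π d * Δc π d|
    = |(1 / (Fintype.card P : ℝ)) * ∑ π, ∑ d ∈ Dset π,
        (p π d - phat π d) / phat π d
          * (c π d * Δc π d - chat π d * Δchat π d)| :=
  dr_bias_general Dset c chat Δc Δchat p phat hphat o hoInt hoE
end
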